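/- arXiv:2409.18670 — 2 statements merged into one kernel-verified Lean document; each statement's English description precedes it below -/
import Mathlib

section
/- Let C=(S,P) be a countable Markov chain, s₀ ∈ S and R ⊆ S such that from every state the probability of eventually reaching R is positive. Suppose that for every δ > 0 there exist a finite set S_δ ⊆ S and m_δ ∈ ℕ such that the probability that X_i ∈ S_δ for all i ≥ m_δ (for the chain started at s₀) exceeds 1 − δ. Then the probability of eventually reaching R from s₀ equals 1. -/
open scoped ENNReal NNReal BigOperators
open Filter

noncomputable section

variable {S : Type*}

/-- Probability of following a finite path (list of successive states). -/
def pathProb (P : S → S → ℝ≥0∞) : List S → ℝ≥0∞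
  | [] => 1
  | [_] => 1
  | a :: b :: l => P a b * pathProb P (b :: l)

/-- `l` is a finite path starting at `s` that visits `T` for the first time
at its last element. -/
def FirstHitPath (T : Set S) (s : S) (l : List S) : Prop :=
  l.head? = some s ∧ ∃ h : l ≠ [], l.getLast h ∈ T ∧
    ∀ i : Fin l.length, (i : ℕ) + 1 < l.length → l.get i ∉ T

/-- Probability of eventually reaching `T` from `s`. -/
def reachProb (P : S → S → ℝ≥0∞) (T : Set S) (s : S) : ℝ≥0∞ :=
  ∑' l : {l : List S // FirstHitPath T s l}, pathProb P (l : List S)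

/-- The avoid set: states from which `T` is unreachable. -/
def Av (P : S → S → ℝ≥0∞) (T : Set S) : Set S := {s | reachProb P T s = 0}

/-- Probability that, starting from `s`, the chain stays outside `R`
during its first `n` steps (i.e. the hitting time of `R` is `> n`). -/
def surviveProb (P : S → S → ℝ≥0∞) (R : Set S) (s : S) (n : ℕ) : ℝ≥0∞ :=
  ∑' l : {l : List S // l.length = n + 1 ∧ l.head? = some s ∧ ∀ x ∈ l, x ∉ R},
    pathProb P (l : List S)

/-- Expected hitting time of `R` from `s`, via `E τ = ∑_{n≥0} Pr(τ > n)`. -/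
def expHittingTime (P : S → S → ℝ≥0∞) (R : Set S) (s : S) : ℝ≥0∞ :=
  ∑' n : ℕ, surviveProb P R s n

/-- Probability that `X_i ∈ A` for all `i ≥ m`, starting from `s`
(as the infimum over finite horizons). -/
def confineProb (P : S → S → ℝ≥0∞) (A : Set S) (s : S) (m : ℕ) : ℝ≥0∞ :=
  ⨅ n : ℕ, ∑' l : {l : List S // l.length = n + 1 ∧ l.head? = some s ∧
      ∀ i : Fin l.length, m ≤ (i : ℕ) → l.get i ∈ A}, pathProb P (l : List S)

/-- Expected reward collected at the first visit of `T`. -/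
def expReward (P : S → S → ℝ≥0∞) (L : List S → ℝ≥0∞) (T : Set S) (s : S) : ℝ≥0∞ :=
  ∑' l : {l : List S // FirstHitPath T s l}, L l * pathProb P (l : List S)

/-- `P` is a stochastic matrix. -/
def IsStochastic (P : S → S → ℝ≥0∞) : Prop := ∀ s, ∑' s', P s s' = 1

/-- States of the biased chain other than `s₋`. -/
abbrev SA (P : S → S → ℝ≥0∞) (F : Set S) := {s : S // s ∉ Av P F}

/-- `P'` (on `(S ∖ Av(F)) ⊎ {s₋}`, with `none = s₋`) is a biased Markov chain
of `(C, T, F)`. -/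
def IsBiased (P : S → S → ℝ≥0∞) (T F : Set S)
    (P' : Option (SA P F) → Option (SA P F) → ℝ≥0∞) : Prop :=
  IsStochastic P' ∧
  P' none none = 1 ∧
  (∀ s : SA P F, s.val ∈ T → P' (some s) (some s) = 1) ∧
  (∀ s s' : SA P F, 0 < P s.val s'.val → 0 < P' (some s) (some s'))

/-- `(C^•, F^•)` together with `α` is an abstraction of `(C, F)`. -/
def IsAbstraction (P : S → S → ℝ≥0∞) (F : Set S)
    {S' : Type*} (P' : S' → S' → ℝ≥0∞) (F' : Set S')
    (α : SA P F → S') : Prop :=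
  (∀ s : SA P F, s.val ∈ F → α s ∈ F') ∧
  (∀ s : SA P F, s.val ∉ F →
    ∑' s' : SA P F, P s.val s'.val * reachProb P' F' (α s')
      ≤ reachProb P' F' (α s))

/-- The decreasing ratio `h(s)` of an abstraction. -/
def hRatio (P : S → S → ℝ≥0∞) (F : Set S)
    {S' : Type*} (P' : S' → S' → ℝ≥0∞) (F' : Set S')
    (α : SA P F → S') (s : SA P F) : ℝ≥0∞ :=
  (∑' s' : SA P F, P s.val s'.val * reachProb P' F' (α s'))
    / reachProb P' F' (α s)

/-- The biased Markov chain constructed from an abstraction. -/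
def biasedKernel (P : S → S → ℝ≥0∞) (F : Set S)
    {S' : Type*} (P' : S' → S' → ℝ≥0∞) (F' : Set S')
    (α : SA P F → S') :
    Option (SA P F) → Option (SA P F) → ℝ≥0∞
  | none, none => 1
  | none, some _ => 0
  | some s, none => 1 - hRatio P F P' F' α s
  | some s, some s' =>
      P s.val s'.val * reachProb P' F' (α s') / reachProb P' F' (α s)

/-- The random walk `W^p` on `ℕ`: `0` absorbing, up with probability `p`,
down with probability `1 - p`. -/
def walkKernel (p : ℝ≥0∞) : ℕ → ℕ → ℝ≥0∞ := fun m n =>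
  if m = 0 then (if n = 0 then 1 else 0)
  else if n = m + 1 then p
  else if n + 1 = m then 1 - p
  else 0

/-- `(C, λ)` is a layered Markov chain. -/
def IsLMC (P : S → S → ℝ≥0∞) (lam : S → ℕ) : Prop :=
  (∀ s s', 0 < P s s' → (lam s : ℤ) ≤ (lam s' : ℤ) + 1) ∧
  (∀ n : ℕ, {s : S | lam s = n}.Finite)

/-- Total probability of increasing the level. -/
def Pup (P : S → S → ℝ≥0∞) (lam : S → ℕ) (s : S) : ℝ≥0∞ :=
  ∑' s' : {s' : S // lam s < lam s'}, P s s'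

/-- Total probability of decreasing the level (by one). -/
def Pdown (P : S → S → ℝ≥0∞) (lam : S → ℕ) (s : S) : ℝ≥0∞ :=
  ∑' s' : {s' : S // lam s' + 1 = lam s}, P s s'

/-- Total probability of keeping the same level. -/
def Peq (P : S → S → ℝ≥0∞) (lam : S → ℕ) (s : S) : ℝ≥0∞ :=
  ∑' s' : {s' : S // lam s' = lam s}, P s s'

/-- `(C, λ)` is `(p⁺, N₀)`-divergent. -/
def Divergent (P : S → S → ℝ≥0∞) (lam : S → ℕ) (pplus : ℝ≥0∞) (N₀ : ℕ) : Prop :=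
  1/2 < pplus ∧ ∀ s : S, N₀ < lam s → Peq P lam s < 1 →
    pplus ≤ Pup P lam s / (Pdown P lam s + Pup P lam s)

end

open scoped Classical

/-!
Let `σₙ(s)` be the probability of avoiding `R` during the first `n` steps from `s`. Reaching `R`
within `n` steps has probability `1 - σₙ(s)`, so it suffices to show `inf σₙ(s₀) = 0`. As `R` is
reachable from every state, `σₙ(s)` eventually drops below `1`, uniformly on a finite set `A`:
`σₖ ≤ β < 1` on `A`. By the Markov property, avoiding `R` for `m + jk` steps while staying in `A`
from time `m` on has probability at most `βʲ`, and leaving `A` after time `m` has probability at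
most `δ`. Hence `σ_{m+jk}(s₀) ≤ βʲ + δ` for all `j` and all `δ > 0`.
-/
noncomputable section

variable {S : Type*}

def pathMass (P : S → S → ℝ≥0∞) (c : List S → Prop) : ℝ≥0∞ :=
  ∑' l : {l : List S // c l}, pathProb P l

section PathMass

variable {P : S → S → ℝ≥0∞}

theorem pathMass_eq_tsum_indicator (c : List S → Prop) :
    pathMass P c = ∑' l, {l | c l}.indicator (pathProb P) l :=
  tsum_subtype {l | c l} (pathProb P)

theorem pathMass_congr {c c' : List S → Prop} (h : ∀ l, c l ↔ c' l) :
    pathMass P c = pathMass P c' := by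
  rw [funext fun l => propext (h l)]

theorem pathMass_mono {c c' : List S → Prop} (h : ∀ l, c l → c' l) :
    pathMass P c ≤ pathMass P c' :=
  ENNReal.tsum_mono_subtype (pathProb P) h

theorem pathMass_eq_zero {c : List S → Prop} (h : ∀ l, ¬ c l) : pathMass P c = 0 := by
  simp [pathMass_eq_tsum_indicator, h]

theorem pathMass_eq_singleton (s : S) : pathMass P (· = [s]) = 1 := by
  rw [pathMass_eq_tsum_indicator, tsum_eq_single [s] fun l hl => by simp [hl]]
  simp [pathProb]

theorem pathMass_add_pathMass (c c' : List S → Prop) :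
    pathMass P c + pathMass P c' =
      pathMass P (fun l => c l ∧ c' l) + pathMass P (fun l => c l ∨ c' l) := by
  simp only [pathMass_eq_tsum_indicator, ← ENNReal.tsum_add]
  refine tsum_congr fun l => ?_
  by_cases hc : c l <;> by_cases hc' : c' l <;> simp [hc, hc']

theorem pathMass_le_of_forall_length_le {c : List S → Prop} {a : ℝ≥0∞}
    (h : ∀ n, pathMass P (fun l => c l ∧ l.length ≤ n) ≤ a) : pathMass P c ≤ a := by
  rw [pathMass_eq_tsum_indicator]
  refine ENNReal.summable.tsum_le_of_sum_le fun F => le_trans ?_ (h (F.sup List.length))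
  rw [pathMass_eq_tsum_indicator]
  refine le_trans (Finset.sum_le_sum fun l hl => ?_) (ENNReal.sum_le_tsum F)
  have hlen : l.length ≤ F.sup List.length := Finset.le_sup (f := List.length) hl
  by_cases hc : c l <;> simp [hc, hlen]

theorem tsum_cons_of_head {f : List S → ℝ≥0∞} {s : S}
    (hf : ∀ l, f l ≠ 0 → l.head? = some s) : ∑' l, f (s :: l) = ∑' l, f l :=
  List.cons_injective.tsum_eq fun l hl => by
    obtain ⟨l', rfl⟩ := List.head?_eq_some_iff.1 (hf l hl)
    exact ⟨l', rfl⟩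

theorem pathMass_eq_tsum_step {c : List S → Prop} {s : S}
    (hc : ∀ l, c l → ∃ b l', l = s :: b :: l') :
    pathMass P c = ∑' b, P s b * pathMass P (fun l => l.head? = some b ∧ c (s :: l)) := by
  have hinj : Function.Injective fun p : S × List S => s :: p.1 :: p.2 := fun p q h => by
    simpa [Prod.ext_iff] using h
  rw [pathMass_eq_tsum_indicator, ← hinj.tsum_eq, ENNReal.tsum_prod']
  · refine tsum_congr fun b => ?_
    rw [pathMass_eq_tsum_indicator, ← ENNReal.tsum_mul_left]
    conv_rhs => rw [← tsum_cons_of_head (s := b) fun l hl => by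
      by_contra hb
      simp [hb] at hl]
    refine tsum_congr fun l => ?_
    by_cases h : c (s :: b :: l) <;> simp [h, pathProb]
  · intro l hl
    obtain ⟨b, l', rfl⟩ := hc l (by by_contra h; simp [h] at hl)
    exact ⟨(b, l'), rfl⟩

end PathMass

def constrainedProb (P : S → S → ℝ≥0∞) (Q : ℕ → S → Prop) (n : ℕ) (s : S) : ℝ≥0∞ :=
  pathMass P fun l => l.length = n + 1 ∧ l.head? = some s ∧ ∀ i : Fin l.length, Q i (l.get i)

theorem forall_get_cons_iff {Q : ℕ → S → Prop} {a : S} {l : List S} :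
    (∀ i : Fin (a :: l).length, Q i ((a :: l).get i)) ↔
      Q 0 a ∧ ∀ i : Fin l.length, Q (i + 1) (l.get i) := by
  simp [Fin.forall_fin_succ]

section ConstrainedProb

variable {P : S → S → ℝ≥0∞} {Q Q' : ℕ → S → Prop} {n : ℕ} {s : S}

theorem constrainedProb_of_not (h : ¬ Q 0 s) (n : ℕ) : constrainedProb P Q n s = 0 :=
  pathMass_eq_zero fun l ⟨_, hhead, hQ⟩ => by
    obtain ⟨l', rfl⟩ := List.head?_eq_some_iff.1 hhead
    exact h (forall_get_cons_iff.1 hQ).1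

theorem constrainedProb_zero (h : Q 0 s) : constrainedProb P Q 0 s = 1 := by
  rw [constrainedProb, ← pathMass_eq_singleton (P := P) s]
  refine pathMass_congr fun l => ⟨fun ⟨hlen, hhead, _⟩ => ?_, ?_⟩
  · obtain ⟨l', rfl⟩ := List.head?_eq_some_iff.1 hhead
    simpa using hlen
  · rintro rfl
    simp [h]

theorem constrainedProb_succ (h : Q 0 s) :
    constrainedProb P Q (n + 1) s = ∑' b, P s b * constrainedProb P (fun t => Q (t + 1)) n b := by
  rw [constrainedProb, pathMass_eq_tsum_step]
  · refine tsum_congr fun b => congrArg _ (pathMass_congr fun l => ?_)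
    rw [forall_get_cons_iff]
    simp only [List.length_cons, List.head?_cons, h, Nat.add_right_cancel_iff, true_and]
    tauto
  · rintro l ⟨hlen, hhead, -⟩
    obtain ⟨_ | ⟨b, l'⟩, rfl⟩ := List.head?_eq_some_iff.1 hhead
    · simp at hlen
    · exact ⟨b, l', rfl⟩

theorem constrainedProb_mono (h : ∀ t x, Q t x → Q' t x) :
    constrainedProb P Q n s ≤ constrainedProb P Q' n s :=
  pathMass_mono fun _ ⟨hlen, hhead, hQ⟩ => ⟨hlen, hhead, fun i => h _ _ (hQ i)⟩

theorem constrainedProb_true (hP : IsStochastic P) (n : ℕ) (s : S) :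
    constrainedProb P (fun _ _ => True) n s = 1 := by
  induction n generalizing s with
  | zero => exact constrainedProb_zero trivial
  | succ n ih => simp only [constrainedProb_succ (Q := fun _ _ => True) trivial, ih, mul_one, hP s]

theorem constrainedProb_le_one (hP : IsStochastic P) : constrainedProb P Q n s ≤ 1 :=
  constrainedProb_true hP n s ▸ constrainedProb_mono fun _ _ _ => trivial

theorem constrainedProb_add_le (hP : IsStochastic P) :
    constrainedProb P Q n s + constrainedProb P Q' n s ≤
      constrainedProb P (fun t x => Q t x ∧ Q' t x) n s + 1 := by
  rw [constrainedProb, constrainedProb, pathMass_add_pathMass, ← constrainedProb_true hP n s]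
  gcongr
  · refine le_of_eq (pathMass_congr fun l => ?_)
    simp only [forall_and]
    tauto
  · exact pathMass_mono fun l h => by
      rcases h with h | h <;> exact ⟨h.1, h.2.1, fun _ => trivial⟩

theorem constrainedProb_succ_le (hP : IsStochastic P) :
    constrainedProb P Q (n + 1) s ≤ constrainedProb P Q n s := by
  induction n generalizing Q s with
  | zero =>
    by_cases h : Q 0 s
    · rw [constrainedProb_succ h, constrainedProb_zero h, ← hP s]
      exact ENNReal.tsum_le_tsum fun b => mul_le_of_le_one_right' (constrainedProb_le_one hP)
    · simp [constrainedProb_of_not h]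
  | succ n ih =>
    by_cases h : Q 0 s
    · rw [constrainedProb_succ h, constrainedProb_succ h]
      exact ENNReal.tsum_le_tsum fun b => by gcongr; exact ih
    · simp [constrainedProb_of_not h]

theorem constrainedProb_add_le_mul {k : ℕ} {C : ℝ≥0∞}
    (h : ∀ t ≥ n, ∀ s', constrainedProb P (fun u => Q (t + u)) k s' ≤ C) :
    constrainedProb P Q (n + k) s ≤ C * constrainedProb P Q n s := by
  induction n generalizing Q s with
  | zero =>
    by_cases hQ : Q 0 s
    · simpa [constrainedProb_zero hQ] using h 0 le_rfl s
    · simp [constrainedProb_of_not hQ]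
  | succ n ih =>
    by_cases hQ : Q 0 s
    · rw [Nat.add_right_comm, constrainedProb_succ hQ, constrainedProb_succ hQ,
        ← ENNReal.tsum_mul_left]
      refine ENNReal.tsum_le_tsum fun b => ?_
      rw [mul_left_comm]
      gcongr
      refine ih fun t ht s' => ?_
      simpa only [Nat.add_right_comm] using h (t + 1) (by omega) s'
    · simp [constrainedProb_of_not hQ]

end ConstrainedProb

section FirstHit

variable {R : Set S} {s b : S} {l : List S}

theorem firstHitPath_singleton (hs : s ∈ R) : FirstHitPath R s [s] :=
  ⟨rfl, List.cons_ne_nil _ _, hs, fun i hi => absurd hi (by simp)⟩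

theorem FirstHitPath.eq_singleton (h : FirstHitPath R s l) (hs : s ∈ R) : l = [s] := by
  obtain ⟨hhead, -, -, hfirst⟩ := h
  obtain ⟨_ | ⟨b, l'⟩, rfl⟩ := List.head?_eq_some_iff.1 hhead
  · rfl
  · exact absurd hs (hfirst ⟨0, by simp⟩ (by simp))

theorem FirstHitPath.exists_eq_cons_cons (h : FirstHitPath R s l) (hs : s ∉ R) :
    ∃ b l', l = s :: b :: l' := by
  obtain ⟨hhead, _, hlast, -⟩ := h
  obtain ⟨_ | ⟨b, l'⟩, rfl⟩ := List.head?_eq_some_iff.1 hhead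
  · exact absurd hlast hs
  · exact ⟨b, l', rfl⟩

theorem firstHitPath_cons_cons_iff (hs : s ∉ R) :
    FirstHitPath R s (s :: b :: l) ↔ FirstHitPath R b (b :: l) := by
  simp [FirstHitPath, Fin.forall_fin_succ, hs]

end FirstHit

def hitWithinProb (P : S → S → ℝ≥0∞) (R : Set S) (n : ℕ) (s : S) : ℝ≥0∞ :=
  pathMass P fun l => FirstHitPath R s l ∧ l.length ≤ n + 1

section Reachability

variable {P : S → S → ℝ≥0∞} {R : Set S} {s : S}

theorem hitWithinProb_of_mem (hs : s ∈ R) (n : ℕ) : hitWithinProb P R n s = 1 := by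
  rw [hitWithinProb, ← pathMass_eq_singleton (P := P) s]
  refine pathMass_congr fun l => ⟨fun h => h.1.eq_singleton hs, ?_⟩
  rintro rfl
  exact ⟨firstHitPath_singleton hs, by simp⟩

theorem hitWithinProb_zero (hs : s ∉ R) : hitWithinProb P R 0 s = 0 :=
  pathMass_eq_zero fun _ ⟨h, hlen⟩ => by
    obtain ⟨b, l', rfl⟩ := h.exists_eq_cons_cons hs
    simp at hlen

theorem hitWithinProb_succ (hs : s ∉ R) (n : ℕ) :
    hitWithinProb P R (n + 1) s = ∑' b, P s b * hitWithinProb P R n b := by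
  rw [hitWithinProb, pathMass_eq_tsum_step fun l h => h.1.exists_eq_cons_cons hs]
  refine tsum_congr fun b => congrArg _ (pathMass_congr fun l => ⟨?_, ?_⟩)
  · rintro ⟨hhead, h, hlen⟩
    obtain ⟨l', rfl⟩ := List.head?_eq_some_iff.1 hhead
    exact ⟨(firstHitPath_cons_cons_iff hs).1 h, by simpa using hlen⟩
  · rintro ⟨h, hlen⟩
    obtain ⟨l', rfl⟩ := List.head?_eq_some_iff.1 h.1
    exact ⟨rfl, (firstHitPath_cons_cons_iff hs).2 h, by simpa using hlen⟩

theorem surviveProb_eq_constrainedProb (n : ℕ) (s : S) :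
    surviveProb P R s n = constrainedProb P (fun _ x => x ∉ R) n s := by
  refine pathMass_congr fun l => and_congr_right fun _ => and_congr_right fun _ => ?_
  refine ⟨fun h i => h _ (l.get_mem i), fun h x hx => ?_⟩
  obtain ⟨i, rfl⟩ := List.mem_iff_get.1 hx
  exact h i

theorem hitWithinProb_add_surviveProb (hP : IsStochastic P) (n : ℕ) (s : S) :
    hitWithinProb P R n s + surviveProb P R s n = 1 := by
  rw [surviveProb_eq_constrainedProb]
  induction n generalizing s with
  | zero =>
    by_cases hs : s ∈ R
    · rw [hitWithinProb_of_mem hs, constrainedProb_of_not (not_not.2 hs), add_zero]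
    · rw [hitWithinProb_zero hs, constrainedProb_zero hs, zero_add]
  | succ n ih =>
    by_cases hs : s ∈ R
    · rw [hitWithinProb_of_mem hs, constrainedProb_of_not (not_not.2 hs), add_zero]
    · rw [hitWithinProb_succ hs, constrainedProb_succ hs, ← ENNReal.tsum_add, ← hP s]
      exact tsum_congr fun b => by rw [← mul_add, ih, mul_one]

theorem hitWithinProb_le_reachProb (n : ℕ) : hitWithinProb P R n s ≤ reachProb P R s :=
  pathMass_mono fun _ h => h.1

theorem reachProb_le_of_forall_hitWithinProb_le {a : ℝ≥0∞}
    (h : ∀ n, hitWithinProb P R n s ≤ a) : reachProb P R s ≤ a :=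
  pathMass_le_of_forall_length_le fun n =>
    (pathMass_mono fun _ hl => ⟨hl.1, by omega⟩).trans (h n)

theorem reachProb_le_one (hP : IsStochastic P) : reachProb P R s ≤ 1 :=
  reachProb_le_of_forall_hitWithinProb_le fun n =>
    hitWithinProb_add_surviveProb hP n s ▸ le_self_add

theorem exists_surviveProb_lt_one (hP : IsStochastic P) (h : 0 < reachProb P R s) :
    ∃ n, surviveProb P R s n < 1 := by
  by_contra! hge
  refine h.ne' (nonpos_iff_eq_zero.1 (reachProb_le_of_forall_hitWithinProb_le fun n => ?_))
  have hle : hitWithinProb P R n s + 1 ≤ 0 + 1 :=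
    calc _ ≤ hitWithinProb P R n s + surviveProb P R s n := by gcongr; exact hge n
      _ = 0 + 1 := by rw [hitWithinProb_add_surviveProb hP, zero_add]
  exact (ENNReal.add_le_add_iff_right ENNReal.one_ne_top).1 hle

theorem reachProb_eq_one_of_iInf_surviveProb (hP : IsStochastic P)
    (h : ⨅ n, surviveProb P R s n = 0) : reachProb P R s = 1 := by
  refine le_antisymm (reachProb_le_one hP) ?_
  calc 1 = ⨅ n, (hitWithinProb P R n s + surviveProb P R s n) := by
        simp [hitWithinProb_add_surviveProb hP]
    _ ≤ ⨅ n, (reachProb P R s + surviveProb P R s n) := by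
        gcongr
        exact hitWithinProb_le_reachProb _
    _ = reachProb P R s := by rw [← ENNReal.add_iInf, h, add_zero]

theorem surviveProb_antitone (hP : IsStochastic P) (s : S) : Antitone (surviveProb P R s) :=
  antitone_nat_of_succ_le fun n => by
    simpa only [surviveProb_eq_constrainedProb] using constrainedProb_succ_le hP

end Reachability

section Confinement

variable {P : S → S → ℝ≥0∞} {R A : Set S}

theorem exists_surviveProb_le_of_finite (hP : IsStochastic P)
    (hreach : ∀ s ∈ A, 0 < reachProb P R s) (hA : A.Finite) :
    ∃ k β, β < 1 ∧ ∀ s ∈ A, surviveProb P R s k ≤ β := by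
  have hev : ∀ᶠ k in atTop, ∀ s ∈ A, surviveProb P R s k < 1 :=
    hA.eventually_all.2 fun s hs => by
      obtain ⟨n, hn⟩ := exists_surviveProb_lt_one hP (hreach s hs)
      exact eventually_atTop.2 ⟨n, fun k hk => (surviveProb_antitone hP s hk).trans_lt hn⟩
  obtain ⟨k, hk⟩ := hev.exists
  refine ⟨k, hA.toFinset.sup (surviveProb P R · k), ?_, fun s hs => ?_⟩
  · exact (Finset.sup_lt_iff zero_lt_one).2 fun s hs => hk s (hA.mem_toFinset.1 hs)
  · exact Finset.le_sup (f := (surviveProb P R · k)) (hA.mem_toFinset.2 hs)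

theorem constrainedProb_confined_le_pow (hP : IsStochastic P) {k : ℕ} {β : ℝ≥0∞}
    (hk : ∀ s ∈ A, surviveProb P R s k ≤ β) (m j : ℕ) (s : S) :
    constrainedProb P (fun t x => x ∉ R ∧ (m ≤ t → x ∈ A)) (m + j * k) s ≤ β ^ j := by
  induction j with
  | zero => simpa using constrainedProb_le_one hP
  | succ j ih =>
    rw [Nat.succ_mul, ← add_assoc, pow_succ']
    refine (constrainedProb_add_le_mul fun t ht s' => ?_).trans (by gcongr)
    by_cases hs' : s' ∈ A
    · calc _ ≤ constrainedProb P (fun _ x => x ∉ R) k s' :=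
            constrainedProb_mono fun _ _ h => h.1
        _ ≤ β := surviveProb_eq_constrainedProb (P := P) k s' ▸ hk s' hs'
    · rw [constrainedProb_of_not fun h => hs' (h.2 (by omega))]
      exact zero_le

theorem surviveProb_le_pow_add (hP : IsStochastic P) {k m : ℕ} {β ε : ℝ≥0∞} {s : S}
    (hk : ∀ s' ∈ A, surviveProb P R s' k ≤ β) (hconf : 1 - ε < confineProb P A s m)
    (j : ℕ) :
    surviveProb P R s (m + j * k) ≤ β ^ j + ε := by
  set N := m + j * k
  have hconfN : 1 - ε ≤ constrainedProb P (fun t x => m ≤ t → x ∈ A) N s :=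
    hconf.le.trans (iInf_le _ N)
  have hsplit := constrainedProb_add_le hP (Q := fun _ x => x ∉ R)
    (Q' := fun t x => m ≤ t → x ∈ A) (n := N) (s := s)
  rw [← surviveProb_eq_constrainedProb] at hsplit
  refine (ENNReal.add_le_add_iff_right ENNReal.one_ne_top).1 ?_
  calc surviveProb P R s N + 1
      ≤ surviveProb P R s N + (constrainedProb P (fun t x => m ≤ t → x ∈ A) N s + ε) := by
        gcongr
        exact le_tsub_add.trans (by gcongr)
    _ ≤ β ^ j + 1 + ε := by
        rw [← add_assoc]
        gcongr ?_ + _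
        exact hsplit.trans (by gcongr; exact constrainedProb_confined_le_pow hP hk m j s)
    _ = β ^ j + ε + 1 := add_right_comm _ _ _

end Confinement

end

section Thms

variable {S : Type*}

theorem stmt3_general (P : S → S → ℝ≥0∞) (hP : IsStochastic P)
    (R : Set S) (s₀ : S) (hreach : ∀ s, 0 < reachProb P R s)
    (hconf : ∀ δ : ℝ≥0∞, 0 < δ →
      ∃ (A : Set S) (m : ℕ), A.Finite ∧ 1 - δ < confineProb P A s₀ m) :
    reachProb P R s₀ = 1 := by
  refine reachProb_eq_one_of_iInf_surviveProb hP (le_antisymm ?_ bot_le)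
  refine ENNReal.le_of_forall_pos_le_add fun ε hε _ => ?_
  obtain ⟨A, m, hA, hconfA⟩ := hconf ε (by positivity)
  obtain ⟨k, β, hβ, hk⟩ := exists_surviveProb_le_of_finite hP (fun s _ => hreach s) hA
  have hlim : Tendsto (fun j => β ^ j + (ε : ℝ≥0∞)) atTop (nhds (0 + ε)) :=
    (ENNReal.tendsto_pow_atTop_nhds_zero_of_lt_one hβ).add tendsto_const_nhds
  exact ge_of_tendsto' hlim fun j => (iInf_le _ _).trans (surviveProb_le_pow_add hP hk hconfA j)

theorem stmt3 [Countable S] (P : S → S → ℝ≥0∞) (hP : IsStochastic P)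
    (R : Set S) (s₀ : S) (hreach : ∀ s, 0 < reachProb P R s)
    (hconf : ∀ δ : ℝ≥0∞, 0 < δ →
      ∃ (A : Set S) (m : ℕ), A.Finite ∧ 1 - δ < confineProb P A s₀ m) :
    reachProb P R s₀ = 1 :=
  stmt3_general P hP R s₀ hreach hconf

end Thms
end

section
/- Let (C^•,F^•) be an α-abstraction of (C,F) and define the chain C' on (S ∖ Av_C(F)) ⊎ {s₋} by P'(s,s') = P(s,s')·μ^•(α(s'))/μ^•(α(s)) for s,s' ∈ S ∖ Av_C(F), P'(s,s₋) = 1 − h(s) with decreasing ratio h(s) = (1/μ^•(α(s)))·∑_{s' ∉ Av_C(F)} P(s,s')·μ^•(α(s')), and s₋ absorbing. Then P' is a well-defined stochastic matrix and C' is a biased Markov chain of (C,T,F) for any absorbing T ⊆ F. -/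
open scoped ENNReal NNReal BigOperators
open Filter

open scoped Classical

section Thms

variable {S : Type*}

/-! The abstraction lemma `μ_F(s) ≤ μ^•(α(s))` holds because `μ^• ∘ α` equals `1` on `F` and is
superharmonic for `P` (condition (B)) on the states that can reach `F`, while reach probabilities,
being the supremum of the probabilities of reaching `F` within a bounded number of steps, are
dominated by every such function. So `μ^•(α(s)) > 0` off `Av(F)` and `P'` is well defined; by (B)
(and `μ^• = 1` on `F^•`) each row sums to `h(s) + (1 - h(s)) = 1`, and positivity of `μ^• ∘ α`
makes `P'` keep the positive transitions and absorbing states of `P`. -/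

theorem ENNReal.tsum_option {α : Type*} (f : Option α → ℝ≥0∞) :
    ∑' o, f o = f none + ∑' a, f (some a) := by
  rw [← (Equiv.optionEquivSumPUnit.{0} α).symm.tsum_eq,
    Summable.tsum_sum ENNReal.summable ENNReal.summable]
  simp [add_comm]

theorem ENNReal.tsum_list {α : Type*} (f : List α → ℝ≥0∞) :
    ∑' l, f l = f [] + ∑' a, ∑' t, f (a :: t) := by
  let e : Option (α × List α) ≃ List α :=
    { toFun := fun | none => [] | some (a, t) => a :: t
      invFun := fun | [] => none | a :: t => some (a, t)
      left_inv := by rintro (_ | ⟨_, _⟩) <;> rfl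
      right_inv := by rintro (_ | _) <;> rfl }
  rw [← e.tsum_eq, ENNReal.tsum_option, ENNReal.tsum_prod']
  rfl

theorem firstHitPath_cons_cons_iff_s8 {T : Set S} {x y : S} (hx : x ∉ T) (t : List S) :
    FirstHitPath T x (x :: y :: t) ↔ FirstHitPath T y (y :: t) := by
  simp [FirstHitPath, Fin.forall_fin_succ, hx]

theorem firstHitPath_singleton_iff {T : Set S} {x : S} : FirstHitPath T x [x] ↔ x ∈ T := by
  simp [FirstHitPath]

theorem firstHitPath_cons_iff_of_mem {T : Set S} {x : S} (hx : x ∈ T) {t : List S} :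
    FirstHitPath T x (x :: t) ↔ t = [] := by
  cases t <;> simp [FirstHitPath, Fin.forall_fin_succ, hx]

noncomputable def reachProbBefore (Q : S → S → ℝ≥0∞) (T : Set S) (n : ℕ) (x : S) : ℝ≥0∞ :=
  ∑' t : List S, if FirstHitPath T x (x :: t) ∧ t.length < n then pathProb Q (x :: t) else 0

theorem reachProb_eq_tsum_cons (Q : S → S → ℝ≥0∞) (T : Set S) (x : S) :
    reachProb Q T x =
      ∑' t : List S, if FirstHitPath T x (x :: t) then pathProb Q (x :: t) else 0 := by
  have head_eq : ∀ {a t}, FirstHitPath T x (a :: t) → a = x := fun h => by simpa using h.1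
  refine (tsum_subtype {l | FirstHitPath T x l} (pathProb Q)).trans ?_
  rw [ENNReal.tsum_list, tsum_eq_single x]
  · simp [Set.indicator, FirstHitPath]
  · intro a ha
    exact ENNReal.tsum_eq_zero.2 fun t => Set.indicator_of_notMem (s := {l | FirstHitPath T x l})
      (fun h => ha (head_eq h)) _

theorem reachProbBefore_zero (Q : S → S → ℝ≥0∞) (T : Set S) (x : S) :
    reachProbBefore Q T 0 x = 0 := by
  simp [reachProbBefore]

theorem reachProbBefore_succ_of_mem (Q : S → S → ℝ≥0∞) {T : Set S} {x : S} (hx : x ∈ T)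
    (n : ℕ) : reachProbBefore Q T (n + 1) x = 1 := by
  rw [reachProbBefore, tsum_eq_single []]
  · simp [firstHitPath_singleton_iff.2 hx, pathProb]
  · intro t ht
    simp [firstHitPath_cons_iff_of_mem hx, ht]

theorem reachProbBefore_succ_of_notMem (Q : S → S → ℝ≥0∞) {T : Set S} {x : S} (hx : x ∉ T)
    (n : ℕ) : reachProbBefore Q T (n + 1) x = ∑' y, Q x y * reachProbBefore Q T n y := by
  rw [reachProbBefore, ENNReal.tsum_list]
  simp only [firstHitPath_singleton_iff, hx, false_and, if_false, zero_add, reachProbBefore,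
    ← ENNReal.tsum_mul_left, firstHitPath_cons_cons_iff_s8 hx, List.length_cons,
    Nat.add_lt_add_iff_right, pathProb, mul_ite, mul_zero]

theorem reachProbBefore_le_reachProb (Q : S → S → ℝ≥0∞) (T : Set S) (n : ℕ) (x : S) :
    reachProbBefore Q T n x ≤ reachProb Q T x := by
  rw [reachProb_eq_tsum_cons]
  refine ENNReal.tsum_le_tsum fun t => ?_
  split_ifs <;> simp_all

theorem reachProb_eq_iSup_reachProbBefore (Q : S → S → ℝ≥0∞) (T : Set S) (x : S) :
    reachProb Q T x = ⨆ n, reachProbBefore Q T n x := by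
  refine le_antisymm ?_ (iSup_le fun n => reachProbBefore_le_reachProb Q T n x)
  rw [reachProb_eq_tsum_cons, ENNReal.tsum_eq_iSup_sum]
  refine iSup_le fun s => le_iSup_of_le (s.sup List.length + 1) ?_
  refine (Finset.sum_le_sum fun t ht => ?_).trans (ENNReal.sum_le_tsum s)
  have : t.length < s.sup List.length + 1 := Nat.lt_succ_of_le (Finset.le_sup ht)
  simp [this]

theorem reachProb_of_mem (Q : S → S → ℝ≥0∞) {T : Set S} {x : S} (hx : x ∈ T) :
    reachProb Q T x = 1 := by
  rw [reachProb_eq_iSup_reachProbBefore]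
  refine le_antisymm (iSup_le fun n => ?_) ?_
  · cases n <;> simp [reachProbBefore_zero, reachProbBefore_succ_of_mem Q hx]
  · exact le_iSup_of_le 1 (reachProbBefore_succ_of_mem Q hx 0).ge

theorem reachProb_le_of_superharmonic {Q : S → S → ℝ≥0∞} {T : Set S} (g : SA Q T → ℝ≥0∞)
    (hT : ∀ x : SA Q T, x.val ∈ T → 1 ≤ g x)
    (hg : ∀ x : SA Q T, x.val ∉ T → ∑' y : SA Q T, Q x.val y.val * g y ≤ g x)
    (x : SA Q T) : reachProb Q T x.val ≤ g x := by
  rw [reachProb_eq_iSup_reachProbBefore]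
  refine iSup_le fun n => ?_
  induction n generalizing x with
  | zero => simp [reachProbBefore_zero]
  | succ n ih =>
    by_cases hx : x.val ∈ T
    · exact (reachProbBefore_succ_of_mem Q hx n).trans_le (hT x hx)
    -- states in `Av Q T` contribute nothing, so the sum may be restricted to `SA Q T`
    have hsupp : Function.support (fun y => Q x.val y * reachProbBefore Q T n y) ⊆
        {y | y ∉ Av Q T} := fun y hy hAv => hy <| by
      simp [nonpos_iff_eq_zero.1 ((reachProbBefore_le_reachProb Q T n y).trans_eq hAv)]
    calc reachProbBefore Q T (n + 1) x.val
        = ∑' y : SA Q T, Q x.val y.val * reachProbBefore Q T n y.val := by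
          rw [reachProbBefore_succ_of_notMem Q hx]
          exact (tsum_subtype_eq_of_support_subset hsupp).symm
      _ ≤ ∑' y : SA Q T, Q x.val y.val * g y := ENNReal.tsum_le_tsum fun y => by gcongr; exact ih y
      _ ≤ g x := hg x hx

theorem tsum_subtype_le_one {Q : S → S → ℝ≥0∞} (hQ : IsStochastic Q) (p : S → Prop) (x : S) :
    ∑' y : {y // p y}, Q x y ≤ 1 :=
  (ENNReal.tsum_comp_le_tsum_of_injective Subtype.val_injective (Q x)).trans_eq (hQ x)

theorem reachProb_le_one_s8 {Q : S → S → ℝ≥0∞} (hQ : IsStochastic Q) (T : Set S) (x : S) :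
    reachProb Q T x ≤ 1 := by
  by_cases hx : x ∈ Av Q T
  · exact hx.le.trans zero_le_one
  · exact reachProb_le_of_superharmonic 1 (fun _ _ => le_rfl)
      (fun y _ => by simpa using tsum_subtype_le_one hQ _ y.val) ⟨x, hx⟩

namespace IsAbstraction

variable {P : S → S → ℝ≥0∞} {F : Set S} {S' : Type*} {P' : S' → S' → ℝ≥0∞} {F' : Set S'}
  {α : SA P F → S'}

theorem reachProb_le (habs : IsAbstraction P F P' F' α) (s : SA P F) :
    reachProb P F s.val ≤ reachProb P' F' (α s) :=
  reachProb_le_of_superharmonic (fun s => reachProb P' F' (α s))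
    (fun s hs => (reachProb_of_mem P' (habs.1 s hs)).ge) habs.2 s

theorem reachProb_ne_zero (habs : IsAbstraction P F P' F' α) (s : SA P F) :
    reachProb P' F' (α s) ≠ 0 :=
  fun h => s.2 (nonpos_iff_eq_zero.1 ((habs.reachProb_le s).trans_eq h))

theorem tsum_mul_reachProb_le (habs : IsAbstraction P F P' F' α) (hP : IsStochastic P)
    (hP' : IsStochastic P') (s : SA P F) :
    ∑' s' : SA P F, P s.val s'.val * reachProb P' F' (α s') ≤ reachProb P' F' (α s) := by
  by_cases hs : s.val ∈ F
  · calc ∑' s' : SA P F, P s.val s'.val * reachProb P' F' (α s')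
        ≤ ∑' s' : SA P F, P s.val s'.val :=
          ENNReal.tsum_le_tsum fun s' => mul_le_of_le_one_right' (reachProb_le_one_s8 hP' F' _)
      _ ≤ 1 := tsum_subtype_le_one hP _ s.val
      _ = reachProb P' F' (α s) := (reachProb_of_mem P' (habs.1 s hs)).symm
  · exact habs.2 s hs

theorem hRatio_le_one (habs : IsAbstraction P F P' F' α) (hP : IsStochastic P)
    (hP' : IsStochastic P') (s : SA P F) : hRatio P F P' F' α s ≤ 1 :=
  ENNReal.div_le_of_le_mul (by rw [one_mul]; exact habs.tsum_mul_reachProb_le hP hP' s)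

theorem isStochastic_biasedKernel (habs : IsAbstraction P F P' F' α) (hP : IsStochastic P)
    (hP' : IsStochastic P') : IsStochastic (biasedKernel P F P' F' α) := by
  rintro (_ | s)
  · simp [ENNReal.tsum_option, biasedKernel]
  · have : ∑' s', biasedKernel P F P' F' α (some s) (some s') = hRatio P F P' F' α s := by
      simp only [biasedKernel, hRatio, div_eq_mul_inv, ENNReal.tsum_mul_right]
    rw [ENNReal.tsum_option, this]
    exact tsub_add_cancel_of_le (habs.hRatio_le_one hP hP' s)

end IsAbstraction

theorem stmt8_general (P : S → S → ℝ≥0∞) (hP : IsStochastic P)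
    (F : Set S) {S' : Type*}
    (P' : S' → S' → ℝ≥0∞) (hP' : IsStochastic P') (F' : Set S')
    (α : SA P F → S') (habs : IsAbstraction P F P' F' α) :
    (∀ s : SA P F, hRatio P F P' F' α s ≤ 1) ∧
    IsStochastic (biasedKernel P F P' F' α) ∧
    ∀ T : Set S, T ⊆ F → (∀ s ∈ T, P s s = 1) →
      IsBiased P T F (biasedKernel P F P' F' α) := by
  have hstoch := habs.isStochastic_biasedKernel hP hP'
  have hμ_ne_top : ∀ s, reachProb P' F' (α s) ≠ ⊤ := fun s =>
    ((reachProb_le_one_s8 hP' F' _).trans_lt ENNReal.one_lt_top).ne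
  refine ⟨habs.hRatio_le_one hP hP', hstoch, fun T _ hT => ⟨hstoch, rfl, ?_, ?_⟩⟩
  · intro s hs
    change P s.val s.val * _ / _ = 1
    rw [hT s.val hs, one_mul, ENNReal.div_self (habs.reachProb_ne_zero s) (hμ_ne_top s)]
  · intro s s' hpos
    exact ENNReal.div_pos (mul_ne_zero hpos.ne' (habs.reachProb_ne_zero s')) (hμ_ne_top s)

theorem stmt8 [Countable S] (P : S → S → ℝ≥0∞) (hP : IsStochastic P)
    (F : Set S) {S' : Type*} [Countable S']
    (P' : S' → S' → ℝ≥0∞) (hP' : IsStochastic P') (F' : Set S')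
    (α : SA P F → S') (habs : IsAbstraction P F P' F' α) :
    (∀ s : SA P F, hRatio P F P' F' α s ≤ 1) ∧
    IsStochastic (biasedKernel P F P' F' α) ∧
    ∀ T : Set S, T ⊆ F → (∀ s ∈ T, P s s = 1) →
      IsBiased P T F (biasedKernel P F P' F' α) :=
  stmt8_general P hP F P' hP' F' α habs

end Thms
end
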